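/- arXiv:1102.1609 — 6 statements merged into one kernel-verified Lean document; each statement's English description precedes it below -/
import Mathlib

section
/- Let d, k, r be integers with d ≥ k ≥ 2 and k ≤ r, let B > 0 be real, and let β₁, β₂ ≥ 0 be reals satisfying B ≤ (d·k − k·(k−1)/2)·β₁ + (r·k − k)·β₂ and B ≤ d·k·β₁ + (r−k)·k·β₂. If d·β₁ + (r−1)·β₂ = B·(2d+r−1)/(k·(2d+r−k)), then β₁ = 2B/(k·(2d+r−k)) and β₂ = B/(k·(2d+r−k)). -/
/-!
Weighting the two cut constraints by `2d` and `r - 1` gives exactly `k (2d + r - k)` times the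
objective `d β₁ + (r - 1) β₂`, so the objective is at least `B (2d + r - 1) / (k (2d + r - k))`,
and equality forces both cut constraints to be tight. Their difference is
`k (k - 1) / 2 · (β₁ - 2 β₂)`, so `β₁ = 2 β₂`, and either constraint then determines `β₂`.
-/

section CutCapacities

variable {K : Type*} [Field K]

/-- Information flow across a cut of type `(1, …, 1)`. -/
def cutCapacityUniform (d k r β₁ β₂ : K) : K :=
  (d * k - k * (k - 1) / 2) * β₁ + (r * k - k) * β₂

/-- Information flow across a cut of type `(k, 0, …, 0)`. -/
def cutCapacityConcentrated (d k r β₁ β₂ : K) : K :=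
  d * k * β₁ + (r - k) * k * β₂

theorem two_mul_cutCapacityUniform_add_cutCapacityConcentrated [CharZero K] (d k r β₁ β₂ : K) :
    2 * d * cutCapacityUniform d k r β₁ β₂ + (r - 1) * cutCapacityConcentrated d k r β₁ β₂ =
      k * (2 * d + r - k) * (d * β₁ + (r - 1) * β₂) := by
  unfold cutCapacityUniform cutCapacityConcentrated
  ring

theorem cutCapacityConcentrated_sub_cutCapacityUniform [CharZero K] (d k r β₁ β₂ : K) :
    cutCapacityConcentrated d k r β₁ β₂ - cutCapacityUniform d k r β₁ β₂ =
      k * (k - 1) / 2 * (β₁ - 2 * β₂) := by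
  unfold cutCapacityUniform cutCapacityConcentrated
  ring

theorem cutCapacityConcentrated_of_eq_two_mul (d k r β₂ : K) :
    cutCapacityConcentrated d k r (2 * β₂) β₂ = k * (2 * d + r - k) * β₂ := by
  unfold cutCapacityConcentrated
  ring

theorem eq_vertex_of_cutCapacities_eq [CharZero K] {d k r B β₁ β₂ : K} (hk : k * (k - 1) ≠ 0)
    (hM : k * (2 * d + r - k) ≠ 0) (h1 : cutCapacityUniform d k r β₁ β₂ = B)
    (h2 : cutCapacityConcentrated d k r β₁ β₂ = B) :
    β₁ = 2 * B / (k * (2 * d + r - k)) ∧ β₂ = B / (k * (2 * d + r - k)) := by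
  have hβ₁ : β₁ = 2 * β₂ := by
    have h := cutCapacityConcentrated_sub_cutCapacityUniform d k r β₁ β₂
    rw [h1, h2, sub_self, eq_comm, mul_eq_zero] at h
    exact sub_eq_zero.mp (h.resolve_left (div_ne_zero hk two_ne_zero))
  have hβ₂ : β₂ = B / (k * (2 * d + r - k)) := by
    rw [eq_div_iff hM, mul_comm, ← cutCapacityConcentrated_of_eq_two_mul, ← hβ₁, h2]
  exact ⟨by rw [hβ₁, hβ₂, mul_div_assoc], hβ₂⟩

end CutCapacities

theorem eq_and_eq_of_mul_add_mul_eq {K : Type*} [Field K] [LinearOrder K] [IsStrictOrderedRing K]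
    {a b B x y : K} (ha : 0 < a) (hb : 0 < b) (hx : B ≤ x) (hy : B ≤ y)
    (h : a * x + b * y = (a + b) * B) : x = B ∧ y = B := by
  rw [add_mul, eq_comm, add_eq_add_iff_eq_and_eq (mul_le_mul_of_nonneg_left hx ha.le)
    (mul_le_mul_of_nonneg_left hy hb.le)] at h
  exact ⟨(mul_left_cancel₀ ha.ne' h.1).symm, (mul_left_cancel₀ hb.ne' h.2).symm⟩

theorem cutCapacities_eq_of_objective_eq {K : Type*} [Field K] [LinearOrder K]
    [IsStrictOrderedRing K] {d k r B β₁ β₂ : K} (hd : 0 < d) (hr : 1 < r)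
    (hM : k * (2 * d + r - k) ≠ 0)
    (h1 : B ≤ cutCapacityUniform d k r β₁ β₂) (h2 : B ≤ cutCapacityConcentrated d k r β₁ β₂)
    (heq : d * β₁ + (r - 1) * β₂ = B * (2 * d + r - 1) / (k * (2 * d + r - k))) :
    cutCapacityUniform d k r β₁ β₂ = B ∧ cutCapacityConcentrated d k r β₁ β₂ = B := by
  refine eq_and_eq_of_mul_add_mul_eq (a := 2 * d) (by positivity) (sub_pos.mpr hr) h1 h2 ?_
  rw [two_mul_cutCapacityUniform_add_cutCapacityConcentrated, heq, mul_div_cancel₀ _ hM]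
  ring

theorem case_one_uniqueness_general
    (d k r : ℤ) (hdk : k ≤ d) (hk : 2 ≤ k) (hkr : k ≤ r)
    (B β₁ β₂ : ℝ)
    (h1 : B ≤ ((d : ℝ) * k - (k : ℝ) * ((k : ℝ) - 1) / 2) * β₁ + ((r : ℝ) * k - k) * β₂)
    (h2 : B ≤ (d : ℝ) * k * β₁ + ((r : ℝ) - k) * k * β₂)
    (heq : (d : ℝ) * β₁ + ((r : ℝ) - 1) * β₂
           = B * (2 * (d : ℝ) + r - 1) / ((k : ℝ) * (2 * d + r - k))) :
    β₁ = 2 * B / ((k : ℝ) * (2 * d + r - k)) ∧ β₂ = B / ((k : ℝ) * (2 * d + r - k)) := by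
  have hk' : (2 : ℝ) ≤ k := by exact_mod_cast hk
  have hdk' : (k : ℝ) ≤ d := by exact_mod_cast hdk
  have hkr' : (k : ℝ) ≤ r := by exact_mod_cast hkr
  have hM : (k : ℝ) * (2 * d + r - k) ≠ 0 := by
    have : (0 : ℝ) < 2 * d + r - k := by linarith
    positivity
  have hkk : (k : ℝ) * (k - 1) ≠ 0 := by
    have : (0 : ℝ) < k - 1 := by linarith
    positivity
  obtain ⟨e1, e2⟩ := cutCapacities_eq_of_objective_eq (by linarith) (by linarith) hM h1 h2 heq
  exact eq_vertex_of_cutCapacities_eq hkk hM e1 e2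

/-- Case 1 (k ≤ r) of the proof of Theorem 1: if the repair bandwidth meets the lower
bound, then (β₁, β₂) must be the vertex point of the polyhedral feasible region. -/
theorem case_one_uniqueness
    (d k r : ℤ) (hdk : k ≤ d) (hk : 2 ≤ k) (hkr : k ≤ r)
    (B β₁ β₂ : ℝ) (hB : 0 < B) (hβ₁ : 0 ≤ β₁) (hβ₂ : 0 ≤ β₂)
    (h1 : B ≤ ((d : ℝ) * k - (k : ℝ) * ((k : ℝ) - 1) / 2) * β₁ + ((r : ℝ) * k - k) * β₂)
    (h2 : B ≤ (d : ℝ) * k * β₁ + ((r : ℝ) - k) * k * β₂)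
    (heq : (d : ℝ) * β₁ + ((r : ℝ) - 1) * β₂
           = B * (2 * (d : ℝ) + r - 1) / ((k : ℝ) * (2 * d + r - k))) :
    β₁ = 2 * B / ((k : ℝ) * (2 * d + r - k)) ∧ β₂ = B / ((k : ℝ) * (2 * d + r - k)) :=
  case_one_uniqueness_general d k r hdk hk hkr B β₁ β₂ h1 h2 heq
end

section
/- Let d, k, r be integers with d ≥ k > r ≥ 2, and set a = ⌊k/r⌋ and b = k − r·a. Let B > 0 be real and let β₁, β₂ ≥ 0 be reals satisfying B ≤ (d·k − k·(k−1)/2)·β₁ + (r·k − k)·β₂ and B ≤ (d·k − r²·a·(a−1)/2 − a·b·r)·β₁ + (r·k − a·r² − b²)·β₂. Then d·β₁ + (r−1)·β₂ ≥ B·(2d+r−1)/(k·(2d+r−k)). -/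
private lemma case_two_aux (D R A Bb B β₁ β₂ : ℝ)
    (hrR : 2 ≤ R) (ha1R : 1 ≤ A) (hb0R : 0 ≤ Bb) (hbrR : Bb + 1 ≤ R)
    (hbbR : 0 ≤ Bb * (Bb - 1)) (hdR : R * A + Bb ≤ D)
    (hβ₁ : 0 ≤ β₁) (hβ₂ : 0 ≤ β₂)
    (h1 : B ≤ (D * (R * A + Bb) - (R * A + Bb) * ((R * A + Bb) - 1) / 2) * β₁
              + (R * (R * A + Bb) - (R * A + Bb)) * β₂)
    (h2 : B ≤ (D * (R * A + Bb) - R ^ 2 * A * (A - 1) / 2 - A * Bb * R) * β₁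
              + (R * (R * A + Bb) - A * R ^ 2 - Bb ^ 2) * β₂) :
    B * (2 * D + R - 1) / ((R * A + Bb) * (2 * D + R - (R * A + Bb)))
      ≤ D * β₁ + (R - 1) * β₂ := by
  set K : ℝ := R * A + Bb with hK
  have hRK : R + Bb ≤ K := by nlinarith [mul_nonneg (by linarith : (0:ℝ) ≤ R) (by linarith : (0:ℝ) ≤ A - 1)]
  have hK2 : 2 ≤ K := by linarith
  have hden : (0:ℝ) < K * (R - 1) - Bb * (R - Bb) := by
    nlinarith [mul_nonneg hb0R (by linarith : (0:ℝ) ≤ R - 1 - Bb)]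
  have hΜ : (0:ℝ) ≤ K * (R - 1) * (K - 1) := mul_nonneg (mul_nonneg (by linarith) (by linarith)) (by linarith)
  have haux : (0:ℝ) ≤ K * (K + R) - (2 * K + R - 1) * Bb := by
    nlinarith [mul_nonneg (by linarith : (0:ℝ) ≤ K - R - Bb) (by linarith : (0:ℝ) ≤ K + 2 * R - Bb),
      mul_nonneg hb0R (by linarith : (0:ℝ) ≤ R - 1 - Bb), sq_nonneg (R - Bb), sq_nonneg R]
  have hΛ : (0:ℝ) ≤ (K * (R - 1) - Bb * (R - Bb)) * (2 * D + R - 1) - K * (R - 1) * (K - 1) := by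
    nlinarith [mul_nonneg (by linarith : (0:ℝ) ≤ R - 1) haux,
      mul_nonneg (by linarith : (0:ℝ) ≤ 2 * K + R - 1) hbbR,
      mul_nonneg (le_of_lt hden) (by linarith : (0:ℝ) ≤ D - K)]
  have hpos : (0:ℝ) < K * (2 * D + R - K) := by nlinarith
  rw [div_le_iff₀ hpos]
  have h1' := mul_le_mul_of_nonneg_left h1 hΛ
  have h2' := mul_le_mul_of_nonneg_left h2 hΜ
  have key : (K * (R - 1) - Bb * (R - Bb)) * (B * (2 * D + R - 1))
      ≤ (K * (R - 1) - Bb * (R - Bb)) * ((D * β₁ + (R - 1) * β₂) * (K * (2 * D + R - K))) := by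
    rw [hK] at h1' h2' ⊢
    linarith [h1', h2']
  exact le_of_mul_le_mul_left key hden

/-- Case 2 (k > r) of the proof of Theorem 1: the type-(1,…,1) and type-(r,…,r,b)
cut constraints imply the lower bound on the repair bandwidth per newcomer. -/
theorem case_two_lower_bound
    (d k r : ℤ) (hdk : k ≤ d) (hkr : r < k) (hr : 2 ≤ r)
    (a b : ℤ) (ha : a = k / r) (hb : b = k - r * a)
    (B β₁ β₂ : ℝ) (hB : 0 < B) (hβ₁ : 0 ≤ β₁) (hβ₂ : 0 ≤ β₂)
    (h1 : B ≤ ((d : ℝ) * k - (k : ℝ) * ((k : ℝ) - 1) / 2) * β₁ + ((r : ℝ) * k - k) * β₂)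
    (h2 : B ≤ ((d : ℝ) * k - (r : ℝ) ^ 2 * a * ((a : ℝ) - 1) / 2 - (a : ℝ) * b * r) * β₁
              + ((r : ℝ) * k - (a : ℝ) * (r : ℝ) ^ 2 - (b : ℝ) ^ 2) * β₂) :
    B * (2 * (d : ℝ) + r - 1) / ((k : ℝ) * (2 * d + r - k))
      ≤ (d : ℝ) * β₁ + ((r : ℝ) - 1) * β₂ := by
  have hr0 : (0:ℤ) < r := by omega
  have hbmod : b = k % r := by rw [hb, ha, Int.emod_def]
  have hb0 : 0 ≤ b := hbmod ▸ Int.emod_nonneg k (by omega)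
  have hbr : b < r := hbmod ▸ Int.emod_lt_of_pos k hr0
  have ha1 : 1 ≤ a := by
    rcases le_or_gt 1 a with h | h
    · exact h
    · exfalso
      have hra : r * a ≤ 0 := mul_nonpos_of_nonneg_of_nonpos (le_of_lt hr0) (by omega)
      omega
  have hk : k = r * a + b := by omega
  subst hk
  have hdR : (r:ℝ) * a + (b:ℝ) ≤ d := by exact_mod_cast hdk
  have hrR : (2:ℝ) ≤ r := by exact_mod_cast hr
  have hb0R : (0:ℝ) ≤ b := by exact_mod_cast hb0
  have hbrR : (b:ℝ) + 1 ≤ r := by exact_mod_cast (by omega : b + 1 ≤ r)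
  have ha1R : (1:ℝ) ≤ a := by exact_mod_cast ha1
  have hbbR : (0:ℝ) ≤ (b:ℝ) * ((b:ℝ) - 1) := by
    have h' : 0 ≤ b * (b - 1) := by
      rcases (by omega : b = 0 ∨ 1 ≤ b) with h | h
      · simp [h]
      · exact mul_nonneg (by omega) (by omega)
    have h'' : ((b * (b - 1) : ℤ) : ℝ) = (b:ℝ) * ((b:ℝ) - 1) := by push_cast; ring
    rw [← h'']; exact_mod_cast h'
  push_cast at h1 h2 ⊢
  exact case_two_aux (d:ℝ) (r:ℝ) (a:ℝ) (b:ℝ) B β₁ β₂ hrR ha1R hb0R hbrR hbbR hdR hβ₁ hβ₂ h1 h2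
end

section
/- Let d, k, r be integers with d ≥ k > r ≥ 2, set a = ⌊k/r⌋ and b = k − r·a, let B > 0 be real, and let β₁, β₂ ≥ 0 be reals satisfying B ≤ (d·k − k·(k−1)/2)·β₁ + (r·k − k)·β₂ and B ≤ (d·k − r²·a·(a−1)/2 − a·b·r)·β₁ + (r·k − a·r² − b²)·β₂. If d·β₁ + (r−1)·β₂ = B·(2d+r−1)/(k·(2d+r−k)), then β₁ = 2B/(k·(2d+r−k)) and β₂ = B/(k·(2d+r−k)). -/
set_option maxHeartbeats 4000000


/-- Case 2 (k > r) of the proof of Theorem 1: if the repair bandwidth meets the lower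
bound, then (β₁, β₂) must be the intersection point of the two constraint lines. -/
theorem case_two_uniqueness
    (d k r : ℤ) (hdk : k ≤ d) (hkr : r < k) (hr : 2 ≤ r)
    (a b : ℤ) (ha : a = k / r) (hb : b = k - r * a)
    (B β₁ β₂ : ℝ) (hB : 0 < B) (hβ₁ : 0 ≤ β₁) (hβ₂ : 0 ≤ β₂)
    (h1 : B ≤ ((d : ℝ) * k - (k : ℝ) * ((k : ℝ) - 1) / 2) * β₁ + ((r : ℝ) * k - k) * β₂)
    (h2 : B ≤ ((d : ℝ) * k - (r : ℝ) ^ 2 * a * ((a : ℝ) - 1) / 2 - (a : ℝ) * b * r) * β₁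
              + ((r : ℝ) * k - (a : ℝ) * (r : ℝ) ^ 2 - (b : ℝ) ^ 2) * β₂)
    (heq : (d : ℝ) * β₁ + ((r : ℝ) - 1) * β₂
           = B * (2 * (d : ℝ) + r - 1) / ((k : ℝ) * (2 * d + r - k))) :
    β₁ = 2 * B / ((k : ℝ) * (2 * d + r - k)) ∧ β₂ = B / ((k : ℝ) * (2 * d + r - k)) := by
  -- integer facts
  have hr0 : (0:ℤ) < r := by omega
  have hbmod : b = k % r := by rw [hb, ha, Int.emod_def]
  have hb0 : (0:ℤ) ≤ b := hbmod ▸ Int.emod_nonneg k (by omega)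
  have hblt : b < r := hbmod ▸ Int.emod_lt_of_pos k hr0
  have hk_eq : k = r * a + b := by rw [hb]; ring
  have ha1 : (1:ℤ) ≤ a := by
    by_contra h
    push_neg at h
    have hra : r * a ≤ 0 := mul_nonpos_of_nonneg_of_nonpos (by omega) (by omega)
    linarith
  have hbb' : (0:ℤ) ≤ b * (b - 1) := by
    rcases eq_or_lt_of_le hb0 with h | h
    · simp [← h]
    · exact mul_nonneg (by omega) (by omega)
  -- real casts
  have hdR : (k:ℝ) ≤ d := by exact_mod_cast hdk
  have hkR : (r:ℝ) + 1 ≤ k := by exact_mod_cast (by omega : r + 1 ≤ k)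
  have hrR : (2:ℝ) ≤ r := by exact_mod_cast hr
  have haR : (1:ℝ) ≤ a := by exact_mod_cast ha1
  have hb0R : (0:ℝ) ≤ b := by exact_mod_cast hb0
  have hbrR : (b:ℝ) ≤ r - 1 := by
    have : b ≤ r - 1 := by omega
    exact_mod_cast this
  have hkeq : (k:ℝ) = r * a + b := by exact_mod_cast hk_eq
  have hbb : (0:ℝ) ≤ (b:ℝ) * ((b:ℝ) - 1) := by exact_mod_cast hbb'
  -- positivity of the denominator
  have hkpos : (0:ℝ) < k := by linarith
  have hD : (0:ℝ) < (k:ℝ) * (2 * d + r - k) := mul_pos hkpos (by linarith)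
  rw [eq_div_iff hD.ne'] at heq
  -- first constraint gives β₁ * D ≤ 2B
  have hA1 : (0:ℝ) ≤ (((d : ℝ) * k - (k : ℝ) * ((k : ℝ) - 1) / 2) * β₁
      + ((r : ℝ) * k - k) * β₂ - B) * ((k:ℝ) * (2 * d + r - k)) :=
    mul_nonneg (by linarith) hD.le
  have key1 : ((r:ℝ) - 1) * k * ((k:ℝ) - 1) / 2 * (2 * B - β₁ * ((k:ℝ) * (2 * d + r - k)))
      = ((((d : ℝ) * k - (k : ℝ) * ((k : ℝ) - 1) / 2) * β₁
          + ((r : ℝ) * k - k) * β₂ - B) * ((k:ℝ) * (2 * d + r - k))) * ((r:ℝ) - 1) := by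
    linear_combination (-(k:ℝ) * ((r:ℝ) - 1)) * heq
  have hx1 : (0:ℝ) ≤ ((r:ℝ) - 1) * k * ((k:ℝ) - 1) / 2
      * (2 * B - β₁ * ((k:ℝ) * (2 * d + r - k))) := by
    rw [key1]; exact mul_nonneg hA1 (by linarith)
  have hposc : (0:ℝ) < ((r:ℝ) - 1) * k * ((k:ℝ) - 1) / 2 := by
    have h3 : (0:ℝ) < (r:ℝ) - 1 := by linarith
    have h4 : (0:ℝ) < (k:ℝ) - 1 := by linarith
    exact div_pos (mul_pos (mul_pos h3 hkpos) h4) two_pos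
  have hle : β₁ * ((k:ℝ) * (2 * d + r - k)) ≤ 2 * B := by nlinarith [hx1, hposc]
  -- second constraint gives β₁ * D ≥ 2B
  have hA2 : (0:ℝ) ≤ (((d : ℝ) * k - (r : ℝ) ^ 2 * a * ((a : ℝ) - 1) / 2 - (a : ℝ) * b * r) * β₁
      + ((r : ℝ) * k - (a : ℝ) * (r : ℝ) ^ 2 - (b : ℝ) ^ 2) * β₂ - B)
      * ((k:ℝ) * (2 * d + r - k)) :=
    mul_nonneg (by linarith) hD.le
  set N : ℝ := ((r:ℝ) - 1) * ((d : ℝ) * k - (r : ℝ) ^ 2 * a * ((a : ℝ) - 1) / 2 - (a : ℝ) * b * r)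
      - (d:ℝ) * ((r : ℝ) * k - (a : ℝ) * (r : ℝ) ^ 2 - (b : ℝ) ^ 2) with hNdef
  have hNid : N = ((d:ℝ) - ((r:ℝ) * a + b)) * ((r:ℝ) * a * ((r:ℝ) - 1) + (b:ℝ) * ((b:ℝ) - 1))
      + ((r:ℝ) * a + b) * ((b:ℝ) * ((b:ℝ) - 1))
      + ((r:ℝ) - 1) * a * r * ((r:ℝ) * ((a:ℝ) + 1)) / 2 := by
    rw [hNdef, hkeq]; ring
  have hN : (0:ℝ) < N := by
    have hra : (0:ℝ) ≤ (r:ℝ) * a * ((r:ℝ) - 1) :=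
      mul_nonneg (mul_nonneg (by linarith) (by linarith)) (by linarith)
    have p1 : (0:ℝ) ≤ ((d:ℝ) - ((r:ℝ) * a + b)) * ((r:ℝ) * a * ((r:ℝ) - 1) + (b:ℝ) * ((b:ℝ) - 1)) :=
      mul_nonneg (by rw [← hkeq]; linarith) (by linarith)
    have p2 : (0:ℝ) ≤ ((r:ℝ) * a + b) * ((b:ℝ) * ((b:ℝ) - 1)) :=
      mul_nonneg (by nlinarith) hbb
    have p3 : (0:ℝ) < ((r:ℝ) - 1) * a * r * ((r:ℝ) * ((a:ℝ) + 1)) / 2 := by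
      apply div_pos _ two_pos
      apply mul_pos (mul_pos (mul_pos (by linarith) (by linarith)) (by linarith))
      nlinarith
    rw [hNid]; linarith
  have key2 : N * (β₁ * ((k:ℝ) * (2 * d + r - k)) - 2 * B)
      = ((((d : ℝ) * k - (r : ℝ) ^ 2 * a * ((a : ℝ) - 1) / 2 - (a : ℝ) * b * r) * β₁
          + ((r : ℝ) * k - (a : ℝ) * (r : ℝ) ^ 2 - (b : ℝ) ^ 2) * β₂ - B)
          * ((k:ℝ) * (2 * d + r - k))) * ((r:ℝ) - 1) := by
    rw [hNdef]
    linear_combination (-((r : ℝ) * k - (a : ℝ) * (r : ℝ) ^ 2 - (b : ℝ) ^ 2)) * heq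
      + (-B * ((r:ℝ) - 1) * ((k:ℝ) + ((r:ℝ) * a + (b:ℝ)))) * hkeq
  have hx2 : (0:ℝ) ≤ N * (β₁ * ((k:ℝ) * (2 * d + r - k)) - 2 * B) := by
    rw [key2]; exact mul_nonneg hA2 (by linarith)
  have hge : 2 * B ≤ β₁ * ((k:ℝ) * (2 * d + r - k)) := by nlinarith [hx2, hN]
  have hβ1D : β₁ * ((k:ℝ) * (2 * d + r - k)) = 2 * B := le_antisymm hle hge
  have hβ2D : β₂ * ((k:ℝ) * (2 * d + r - k)) = B := by
    have hcancel : ((r:ℝ) - 1) * (β₂ * ((k:ℝ) * (2 * d + r - k))) = ((r:ℝ) - 1) * B := by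
      linear_combination heq - (d:ℝ) * hβ1D
    have hrne : ((r:ℝ) - 1) ≠ 0 := by linarith
    exact mul_left_cancel₀ hrne hcancel
  constructor
  · rw [eq_div_iff hD.ne']; linarith
  · rw [eq_div_iff hD.ne']; linarith
end

section
/- Let d, k, r be integers with d ≥ k ≥ 1, k ≤ r, and r ≥ 2, and let B > 0 be real. Then the minimum of d·β₁ + (r−1)·β₂ over all pairs of reals β₁, β₂ ≥ 0 satisfying B ≤ (d·k − k·(k−1)/2)·β₁ + (r·k − k)·β₂ and B ≤ d·k·β₁ + (r−k)·k·β₂ equals B·(2d+r−1)/(k·(2d+r−k)); i.e., every feasible pair satisfies d·β₁ + (r−1)·β₂ ≥ B·(2d+r−1)/(k·(2d+r−k)), and the pair (β₁, β₂) = (2B/(k·(2d+r−k)), B/(k·(2d+r−k))) is feasible and attains this value. -/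
/-- Case 1 (k ≤ r) linear program: the minimum of d·β₁ + (r−1)·β₂ subject to the
type-(1,…,1) and type-(k,0,…,0) cut constraints equals B·(2d+r−1)/(k·(2d+r−k)),
attained at (β₁, β₂) = (2B/(k(2d+r−k)), B/(k(2d+r−k))). -/
theorem case_one_linear_program
    (d k r : ℤ) (hdk : k ≤ d) (hk : 1 ≤ k) (hkr : k ≤ r) (hr : 2 ≤ r)
    (B : ℝ) (hB : 0 < B) :
    (∀ β₁ β₂ : ℝ, 0 ≤ β₁ → 0 ≤ β₂ →
        B ≤ ((d : ℝ) * k - (k : ℝ) * ((k : ℝ) - 1) / 2) * β₁ + ((r : ℝ) * k - k) * β₂ →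
        B ≤ (d : ℝ) * k * β₁ + ((r : ℝ) - k) * k * β₂ →
        B * (2 * (d : ℝ) + r - 1) / ((k : ℝ) * (2 * d + r - k))
          ≤ (d : ℝ) * β₁ + ((r : ℝ) - 1) * β₂)
    ∧ (let β₁ : ℝ := 2 * B / ((k : ℝ) * (2 * d + r - k));
       let β₂ : ℝ := B / ((k : ℝ) * (2 * d + r - k));
       0 ≤ β₁ ∧ 0 ≤ β₂
       ∧ B ≤ ((d : ℝ) * k - (k : ℝ) * ((k : ℝ) - 1) / 2) * β₁ + ((r : ℝ) * k - k) * β₂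
       ∧ B ≤ (d : ℝ) * k * β₁ + ((r : ℝ) - k) * k * β₂
       ∧ (d : ℝ) * β₁ + ((r : ℝ) - 1) * β₂
           = B * (2 * (d : ℝ) + r - 1) / ((k : ℝ) * (2 * d + r - k))) := by
  have hk' : (1:ℝ) ≤ (k:ℝ) := by exact_mod_cast hk
  have hdk' : (k:ℝ) ≤ (d:ℝ) := by exact_mod_cast hdk
  have hkr' : (k:ℝ) ≤ (r:ℝ) := by exact_mod_cast hkr
  have hr' : (2:ℝ) ≤ (r:ℝ) := by exact_mod_cast hr
  have hS : 0 < (k:ℝ) * (2 * d + r - k) := by nlinarith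
  have hne : (k:ℝ) * (2 * d + r - k) ≠ 0 := ne_of_gt hS
  constructor
  · intro β₁ β₂ h1 h2 hc1 hc2
    rw [div_le_iff₀ hS]
    have hd2 : (0:ℝ) ≤ 2 * (d:ℝ) := by linarith
    have hr1 : (0:ℝ) ≤ (r:ℝ) - 1 := by linarith
    nlinarith [mul_le_mul_of_nonneg_left hc1 hd2, mul_le_mul_of_nonneg_left hc2 hr1]
  · intro β₁ β₂
    have hβ₂ : 0 ≤ B / ((k:ℝ) * (2 * d + r - k)) := by positivity
    have hβ₁ : 0 ≤ 2 * B / ((k:ℝ) * (2 * d + r - k)) := by positivity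
    refine ⟨hβ₁, hβ₂, le_of_eq ?_, le_of_eq ?_, ?_⟩
    · have e : ((d : ℝ) * k - (k : ℝ) * ((k : ℝ) - 1) / 2) * β₁ + ((r : ℝ) * k - k) * β₂
          = ((k:ℝ) * (2 * d + r - k)) * (B / ((k:ℝ) * (2 * d + r - k))) := by
        simp only [β₁, β₂]; ring
      rw [e, mul_div_cancel₀ _ hne]
    · have e : (d : ℝ) * k * β₁ + ((r : ℝ) - k) * k * β₂
          = ((k:ℝ) * (2 * d + r - k)) * (B / ((k:ℝ) * (2 * d + r - k))) := by
        simp only [β₁, β₂]; ring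
      rw [e, mul_div_cancel₀ _ hne]
    · simp only [β₁, β₂]; ring
end

section
/- Let d, k, r be integers with d ≥ k > r ≥ 2, set a = ⌊k/r⌋ and b = k − r·a, and let B > 0 be real. Then the minimum of d·β₁ + (r−1)·β₂ over all pairs of reals β₁, β₂ ≥ 0 satisfying B ≤ (d·k − k·(k−1)/2)·β₁ + (r·k − k)·β₂ and B ≤ (d·k − r²·a·(a−1)/2 − a·b·r)·β₁ + (r·k − a·r² − b²)·β₂ equals B·(2d+r−1)/(k·(2d+r−k)); i.e., every feasible pair satisfies d·β₁ + (r−1)·β₂ ≥ B·(2d+r−1)/(k·(2d+r−k)), and the pair (β₁, β₂) = (2B/(k·(2d+r−k)), B/(k·(2d+r−k))) is feasible and attains this value. -/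
/-!
For each of the two cuts, twice the `β₁`-coefficient plus the `β₂`-coefficient equals
`K = k(2d+r−k)` (for the second cut because `(ra + b)² = k²`), so both constraint lines pass
through the vertex `(β₁, β₂) = (2B/K, B/K)`, where the objective equals `B(2d+r−1)/K`.
The vertex is optimal because the objective `(d, r−1)` lies in the cone spanned by the two
constraint normals, which amounts to three `2 × 2` determinant signs. The only one with content
uses that the second cut's `β₂`-coefficient `b(r−b)` is at most `r²/4`, while the first cut's
is `k(r−1) ≥ r² − 1`.
-/

theorem mul_add_mul_le_of_cross_nonneg {p₁ q₁ p₂ q₂ u v x₀ y₀ x y : ℝ}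
    (hdet : 0 < p₂ * q₁ - p₁ * q₂) (h₁ : 0 ≤ u * q₁ - v * p₁) (h₂ : 0 ≤ v * p₂ - u * q₂)
    (hc₁ : p₁ * x₀ + q₁ * y₀ ≤ p₁ * x + q₁ * y) (hc₂ : p₂ * x₀ + q₂ * y₀ ≤ p₂ * x + q₂ * y) :
    u * x₀ + v * y₀ ≤ u * x + v * y := by
  have key : (p₂ * q₁ - p₁ * q₂) * (u * (x - x₀) + v * (y - y₀)) =
      (v * p₂ - u * q₂) * (p₁ * (x - x₀) + q₁ * (y - y₀)) +
        (u * q₁ - v * p₁) * (p₂ * (x - x₀) + q₂ * (y - y₀)) := by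
    ring
  have : 0 ≤ u * (x - x₀) + v * (y - y₀) := by
    refine (mul_nonneg_iff_of_pos_left hdet).mp ?_
    rw [key]
    exact add_nonneg (mul_nonneg h₂ (by linarith)) (mul_nonneg h₁ (by linarith))
  linarith

theorem mul_two_div_add_mul_div (p q B K : ℝ) :
    p * (2 * B / K) + q * (B / K) = B * (2 * p + q) / K := by
  ring

section Cuts

variable {d k r : ℝ}

theorem first_cut_cross_nonneg (hr : 1 ≤ r) (hk : 1 ≤ k) :
    0 ≤ d * (r * k - k) - (r - 1) * (d * k - k * (k - 1) / 2) := by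
  have : d * (r * k - k) - (r - 1) * (d * k - k * (k - 1) / 2) = (r - 1) * k * (k - 1) / 2 := by
    ring
  rw [this]
  apply div_nonneg _ zero_le_two
  apply mul_nonneg (mul_nonneg _ _) <;> linarith

theorem vertex_denominator_pos (hdk : k ≤ d) (hkr : r + 1 ≤ k) (hr : 2 ≤ r) :
    0 < k * (2 * d + r - k) := by
  apply mul_pos <;> linarith

theorem second_cut_cross_nonneg (hdk : k ≤ d) (hkr : r + 1 ≤ k) (hr : 2 ≤ r) {p q : ℝ}
    (hpq : 2 * p + q = k * (2 * d + r - k)) (hq : q ≤ r ^ 2 / 4) :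
    0 ≤ (r - 1) * p - d * q := by
  have hS : 0 ≤ 2 * d + r - 1 := by linarith
  have : (2 * d + r - 1) * q ≤ (r - 1) * (k * (2 * d + r - k)) :=
    calc (2 * d + r - 1) * q ≤ (2 * d + r - 1) * (r ^ 2 / 4) := mul_le_mul_of_nonneg_left hq hS
      _ ≤ (2 * d + r - 1) * ((r - 1) * k / 2) := by
        apply mul_le_mul_of_nonneg_left _ hS
        nlinarith
      _ ≤ (r - 1) * (k * (2 * d + r - k)) := by
        have : 0 ≤ (r - 1) * k * (2 * d + r + 1 - 2 * k) :=
          mul_nonneg (mul_nonneg (by linarith) (by linarith)) (by linarith)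
        linarith
  linear_combination (1 - r) / 2 * hpq + this / 2

theorem cut_cross_pos (hdk : k ≤ d) (hkr : r + 1 ≤ k) (hr : 2 ≤ r) {p q : ℝ}
    (hpq : 2 * p + q = k * (2 * d + r - k)) (hq : q ≤ r ^ 2 / 4) :
    0 < p * (r * k - k) - (d * k - k * (k - 1) / 2) * q := by
  have hqC : q < r * k - k := by nlinarith
  have := mul_pos (vertex_denominator_pos hdk hkr hr) (sub_pos.2 hqC)
  linear_combination (k - r * k) / 2 * hpq + this / 2

end Cuts

theorem first_cut_line (d k r : ℝ) :
    2 * (d * k - k * (k - 1) / 2) + (r * k - k) = k * (2 * d + r - k) := by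
  ring

theorem second_cut_line {d k r a b : ℝ} (hb : b = k - r * a) :
    2 * (d * k - r ^ 2 * a * (a - 1) / 2 - a * b * r) + (r * k - a * r ^ 2 - b ^ 2)
      = k * (2 * d + r - k) := by
  subst hb; ring

theorem second_cut_coeff_le {k r a b : ℝ} (hb : b = k - r * a) :
    r * k - a * r ^ 2 - b ^ 2 ≤ r ^ 2 / 4 := by
  have : r * k - a * r ^ 2 - b ^ 2 = b * (r - b) := by subst hb; ring
  rw [this]
  nlinarith [sq_nonneg (r - 2 * b)]

theorem case_two_linear_program_general
    (d k r : ℤ) (hdk : k ≤ d) (hkr : r < k) (hr : 2 ≤ r)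
    (a b : ℤ) (hb : b = k - r * a)
    (B : ℝ) (hB : 0 < B) :
    (∀ β₁ β₂ : ℝ, 0 ≤ β₁ → 0 ≤ β₂ →
        B ≤ ((d : ℝ) * k - (k : ℝ) * ((k : ℝ) - 1) / 2) * β₁ + ((r : ℝ) * k - k) * β₂ →
        B ≤ ((d : ℝ) * k - (r : ℝ) ^ 2 * a * ((a : ℝ) - 1) / 2 - (a : ℝ) * b * r) * β₁
            + ((r : ℝ) * k - (a : ℝ) * (r : ℝ) ^ 2 - (b : ℝ) ^ 2) * β₂ →
        B * (2 * (d : ℝ) + r - 1) / ((k : ℝ) * (2 * d + r - k))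
          ≤ (d : ℝ) * β₁ + ((r : ℝ) - 1) * β₂)
    ∧ (let β₁ : ℝ := 2 * B / ((k : ℝ) * (2 * d + r - k));
       let β₂ : ℝ := B / ((k : ℝ) * (2 * d + r - k));
       0 ≤ β₁ ∧ 0 ≤ β₂
       ∧ B ≤ ((d : ℝ) * k - (k : ℝ) * ((k : ℝ) - 1) / 2) * β₁ + ((r : ℝ) * k - k) * β₂
       ∧ B ≤ ((d : ℝ) * k - (r : ℝ) ^ 2 * a * ((a : ℝ) - 1) / 2 - (a : ℝ) * b * r) * β₁
             + ((r : ℝ) * k - (a : ℝ) * (r : ℝ) ^ 2 - (b : ℝ) ^ 2) * β₂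
       ∧ (d : ℝ) * β₁ + ((r : ℝ) - 1) * β₂
           = B * (2 * (d : ℝ) + r - 1) / ((k : ℝ) * (2 * d + r - k))) := by
  have hdk : (k : ℝ) ≤ d := by exact_mod_cast hdk
  have hkr : (r : ℝ) + 1 ≤ k := by exact_mod_cast (show r + 1 ≤ k by omega)
  have hr : (2 : ℝ) ≤ r := by exact_mod_cast hr
  have hb : (b : ℝ) = k - r * a := by exact_mod_cast hb
  have hK := vertex_denominator_pos hdk hkr hr
  have hvert₁ := mul_two_div_add_mul_div ((d : ℝ) * k - (k : ℝ) * ((k : ℝ) - 1) / 2)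
    ((r : ℝ) * k - k) B ((k : ℝ) * (2 * d + r - k))
  rw [first_cut_line, mul_div_cancel_right₀ B hK.ne'] at hvert₁
  have hvert₂ := mul_two_div_add_mul_div
    ((d : ℝ) * k - (r : ℝ) ^ 2 * a * ((a : ℝ) - 1) / 2 - (a : ℝ) * b * r)
    ((r : ℝ) * k - (a : ℝ) * (r : ℝ) ^ 2 - (b : ℝ) ^ 2) B ((k : ℝ) * (2 * d + r - k))
  rw [second_cut_line hb, mul_div_cancel_right₀ B hK.ne'] at hvert₂
  have hobj := mul_two_div_add_mul_div (d : ℝ) ((r : ℝ) - 1) B ((k : ℝ) * (2 * d + r - k))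
  rw [← add_sub_assoc] at hobj
  refine ⟨fun β₁ β₂ _ _ h₁ h₂ => ?_, by positivity, by positivity, hvert₁.ge, hvert₂.ge, hobj⟩
  rw [← hobj]
  exact mul_add_mul_le_of_cross_nonneg
    (cut_cross_pos hdk hkr hr (second_cut_line hb) (second_cut_coeff_le hb))
    (first_cut_cross_nonneg (by linarith) (by linarith))
    (second_cut_cross_nonneg hdk hkr hr (second_cut_line hb) (second_cut_coeff_le hb))
    (hvert₁.symm ▸ h₁) (hvert₂.symm ▸ h₂)

/-- Case 2 (k > r) linear program: the minimum of d·β₁ + (r−1)·β₂ subject to the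
type-(1,…,1) and type-(r,…,r,b) cut constraints equals B·(2d+r−1)/(k·(2d+r−k)),
attained at (β₁, β₂) = (2B/(k(2d+r−k)), B/(k(2d+r−k))). -/
theorem case_two_linear_program
    (d k r : ℤ) (hdk : k ≤ d) (hkr : r < k) (hr : 2 ≤ r)
    (a b : ℤ) (ha : a = k / r) (hb : b = k - r * a)
    (B : ℝ) (hB : 0 < B) :
    (∀ β₁ β₂ : ℝ, 0 ≤ β₁ → 0 ≤ β₂ →
        B ≤ ((d : ℝ) * k - (k : ℝ) * ((k : ℝ) - 1) / 2) * β₁ + ((r : ℝ) * k - k) * β₂ →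
        B ≤ ((d : ℝ) * k - (r : ℝ) ^ 2 * a * ((a : ℝ) - 1) / 2 - (a : ℝ) * b * r) * β₁
            + ((r : ℝ) * k - (a : ℝ) * (r : ℝ) ^ 2 - (b : ℝ) ^ 2) * β₂ →
        B * (2 * (d : ℝ) + r - 1) / ((k : ℝ) * (2 * d + r - k))
          ≤ (d : ℝ) * β₁ + ((r : ℝ) - 1) * β₂)
    ∧ (let β₁ : ℝ := 2 * B / ((k : ℝ) * (2 * d + r - k));
       let β₂ : ℝ := B / ((k : ℝ) * (2 * d + r - k));
       0 ≤ β₁ ∧ 0 ≤ β₂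
       ∧ B ≤ ((d : ℝ) * k - (k : ℝ) * ((k : ℝ) - 1) / 2) * β₁ + ((r : ℝ) * k - k) * β₂
       ∧ B ≤ ((d : ℝ) * k - (r : ℝ) ^ 2 * a * ((a : ℝ) - 1) / 2 - (a : ℝ) * b * r) * β₁
             + ((r : ℝ) * k - (a : ℝ) * (r : ℝ) ^ 2 - (b : ℝ) ^ 2) * β₂
       ∧ (d : ℝ) * β₁ + ((r : ℝ) - 1) * β₂
           = B * (2 * (d : ℝ) + r - 1) / ((k : ℝ) * (2 * d + r - k))) :=
  case_two_linear_program_general d k r hdk hkr hr a b hb B hB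
end

section
/- Let F be a finite field, let k ≥ 1 and r ≥ 1 be integers, and set n = k + r. Let v₁, …, v_{n−1} ∈ F^k be vectors such that any k of them are linearly independent. For i ∈ {1,…,n} define the content of node i as the map C_i : (F^k)^n → F^k × F^{n−1} given by C_i(x₁,…,x_n) = (x_i, (x_{i⊕1}·v₁, x_{i⊕2}·v₂, …, x_{i⊕(n−1)}·v_{n−1})), where x·v denotes the dot product and i⊕m := i+m if i+m ≤ n and i+m−n otherwise. Then for every subset S ⊆ {1,…,n} of size k, the map x ↦ (C_i(x))_{i∈S} from (F^k)^n to (F^k × F^{n−1})^k is injective. -/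
/-- File reconstruction for the explicit MBCR code: nodes are indexed 1,…,n (encoded
here as `Fin n`, node `i : Fin n` being node number `i+1`); node number `i'` stores the
systematic group `x_{i'}` together with the parity packets `x_{i'⊕m}·v_m` for
`m = 1,…,n−1`, where `i'⊕m = i'+m` if `i'+m ≤ n` and `i'+m−n` otherwise, and any `k` of
the vectors `v₁,…,v_{n−1}` are linearly independent. Then the contents of any `k` nodes
determine the whole file, i.e. the map sending the file `x` to the contents of the `k`
chosen nodes is injective. -/
theorem MBCR_file_reconstruction
    (F : Type*) [Field F] [Fintype F]
    (k r : ℕ) (hk : 1 ≤ k) (hr : 1 ≤ r) (n : ℕ) (hn : n = k + r)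
    (v : Fin (n - 1) → (Fin k → F))
    (hMDS : ∀ T : Finset (Fin (n - 1)), T.card = k →
      LinearIndependent F (fun j : T => v j))
    (S : Finset (Fin n)) (hS : S.card = k) :
    Function.Injective
      (fun (x : Fin n → Fin k → F) => fun i : S =>
        ((x i,
          fun m : Fin (n - 1) =>
            ∑ t, x (if h : (i : Fin n).val + 1 + (m.val + 1) ≤ n then
                      ⟨(i : Fin n).val + m.val + 1, by
                        have := m.isLt; omega⟩
                    else
                      ⟨(i : Fin n).val + m.val + 1 - n, by
                        have := (i : Fin n).isLt; have := m.isLt; omega⟩) t * v m t)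
          : (Fin k → F) × (Fin (n - 1) → F))) := by
  intro x y h
  funext j
  by_cases hj : j ∈ S
  · exact congrArg Prod.fst (congrFun h ⟨j, hj⟩)
  · -- j ∉ S : reconstruct x j from parity packets
    have hjn := j.isLt
    have hne : ∀ i : S, ((i : Fin n)).val ≠ j.val := by
      intro i he
      exact hj (Fin.ext he ▸ i.2)
    -- the parity index pointing from node i to node j
    let mfun : S → Fin (n - 1) := fun i =>
      if hij : (i : Fin n).val < j.val then
        ⟨j.val - (i : Fin n).val - 1, by omega⟩
      else
        ⟨j.val + n - (i : Fin n).val - 1, by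
          have h1 := (i : Fin n).isLt
          have h2 := hne i
          omega⟩
    have hmval : ∀ i : S,
        (mfun i).val + (i : Fin n).val + 1 = j.val ∨
        (mfun i).val + (i : Fin n).val + 1 = j.val + n := by
      intro i
      have h1 := (i : Fin n).isLt
      have h2 := hne i
      simp only [mfun]
      split_ifs with hij
      · left; simp; omega
      · right; simp; omega
    have hidx : ∀ i : S,
        (if h : (i : Fin n).val + 1 + ((mfun i).val + 1) ≤ n then
            (⟨(i : Fin n).val + (mfun i).val + 1, by
              have := (mfun i).isLt; omega⟩ : Fin n)
          else
            ⟨(i : Fin n).val + (mfun i).val + 1 - n, by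
              have := (i : Fin n).isLt; have := (mfun i).isLt; omega⟩) = j := by
      intro i
      have h1 := hmval i
      apply Fin.ext
      split_ifs with hle <;> simp <;> omega
    have hdot : ∀ i : S, ∑ t, x j t * v (mfun i) t = ∑ t, y j t * v (mfun i) t := by
      intro i
      have heq := congrFun (congrArg Prod.snd (congrFun h i)) (mfun i)
      calc ∑ t, x j t * v (mfun i) t
          = ∑ t, x (if h : (i : Fin n).val + 1 + ((mfun i).val + 1) ≤ n then
                      (⟨(i : Fin n).val + (mfun i).val + 1, by
                        have := (mfun i).isLt; omega⟩ : Fin n)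
                    else
                      ⟨(i : Fin n).val + (mfun i).val + 1 - n, by
                        have := (i : Fin n).isLt; have := (mfun i).isLt; omega⟩) t
                * v (mfun i) t := by rw [hidx i]
        _ = ∑ t, y (if h : (i : Fin n).val + 1 + ((mfun i).val + 1) ≤ n then
                      (⟨(i : Fin n).val + (mfun i).val + 1, by
                        have := (mfun i).isLt; omega⟩ : Fin n)
                    else
                      ⟨(i : Fin n).val + (mfun i).val + 1 - n, by
                        have := (i : Fin n).isLt; have := (mfun i).isLt; omega⟩) t
                * v (mfun i) t := heq
        _ = ∑ t, y j t * v (mfun i) t := by rw [hidx i]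
    -- injectivity of mfun
    have hminj : Function.Injective mfun := by
      intro a b hab
      have hval := congrArg Fin.val hab
      have ha1 := (a : Fin n).isLt
      have hb1 := (b : Fin n).isLt
      have ha2 := hne a
      have hb2 := hne b
      simp only [mfun] at hval
      apply Subtype.ext
      apply Fin.ext
      split_ifs at hval <;> simp at hval <;> omega
    -- the set of parity indices used
    set T : Finset (Fin (n - 1)) := Finset.univ.image (fun i : S => mfun i) with hT
    have hTcard : T.card = k := by
      rw [hT, Finset.card_image_of_injective _ hminj, Finset.card_univ,
        Fintype.card_coe, hS]
    have hli := hMDS T hTcard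
    have hspan : Submodule.span F (Set.range fun m : T => v m) = ⊤ := by
      haveI : Nonempty T := (Finset.card_pos.mp (by omega : 0 < T.card)).to_subtype
      apply hli.span_eq_top_of_card_eq_finrank
      simp [Fintype.card_coe, hTcard]
    -- the difference vector
    set d : Fin k → F := fun t => x j t - y j t with hd
    let f : (Fin k → F) →ₗ[F] F := ∑ t, d t • LinearMap.proj t
    have hf : ∀ w, f w = ∑ t, d t * w t := by
      intro w
      simp [f, LinearMap.sum_apply]
    have hker : ∀ m ∈ T, v m ∈ LinearMap.ker f := by
      intro m hm
      rw [hT, Finset.mem_image] at hm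
      obtain ⟨i, -, hi⟩ := hm
      rw [LinearMap.mem_ker, hf, ← hi]
      have := hdot i
      simp only [hd]
      rw [show (∑ t, (x j t - y j t) * v (mfun i) t)
          = ∑ t, x j t * v (mfun i) t - ∑ t, y j t * v (mfun i) t by
        rw [← Finset.sum_sub_distrib]; exact Finset.sum_congr rfl fun t _ => sub_mul _ _ _]
      rw [this, sub_self]
    have hftop : ∀ w, f w = 0 := by
      intro w
      have : Submodule.span F (Set.range fun m : T => v m) ≤ LinearMap.ker f := by
        rw [Submodule.span_le]
        rintro _ ⟨m, rfl⟩
        exact hker m m.2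
      rw [hspan, top_le_iff] at this
      have : w ∈ LinearMap.ker f := this ▸ Submodule.mem_top
      exact this
    funext t
    have h0 := hftop (Pi.single t 1)
    rw [hf] at h0
    simp [Pi.single_apply, mul_ite] at h0
    exact sub_eq_zero.mp h0
end
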